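/- arXiv:1207.4577 — 4 statements merged into one kernel-verified Lean document; each statement's English description precedes it below -/
import Mathlib

section
/- Let L be a complete lattice and f : L × L → L a function monotone in both arguments. Then ν X. μ Y. (X ⊓ f(X,Y)) = ν X. μ Y. f(X,Y), where μ and ν denote least and greatest fixpoints (which exist by Knaster–Tarski since the maps Y ↦ X ⊓ f(X,Y) and Y ↦ f(X,Y) are monotone, and the resulting maps in X are monotone). -/
/-!
Write `G X = μ Y. f(X,Y)` and `H X = μ Y. (X ⊓ f(X,Y))`. Since `H ≤ G` pointwise, `ν H ≤ ν G`.
Conversely `a = ν G` satisfies `μ Y. f(a,Y) = a`, and cutting a monotone map by an upper bound of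
its least fixpoint does not change that fixpoint, so `H a = G a = a` and `a ≤ ν H`.
-/

namespace OrderHom

variable {L : Type*} [CompleteLattice L]

theorem lfp_const_inf_eq_lfp {g : L →o L} {x : L} (h : lfp g ≤ x) :
    lfp (const L x ⊓ g) = lfp g := by
  have hle : lfp (const L x ⊓ g) ≤ lfp g :=
    lfp_le_fixed _ (show x ⊓ g (lfp g) = lfp g by rw [map_lfp, inf_eq_right.mpr h])
  refine hle.antisymm (lfp_le_fixed _ ?_)
  have hgx : g (lfp (const L x ⊓ g)) ≤ x := (g.mono hle).trans ((map_lfp g).le.trans h)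
  calc g (lfp (const L x ⊓ g)) = x ⊓ g (lfp (const L x ⊓ g)) := (inf_eq_right.mpr hgx).symm
    _ = lfp (const L x ⊓ g) := map_lfp (const L x ⊓ g)

end OrderHom

open OrderHom in
/-- ν X. μ Y. (X ⊓ f(X,Y)) = ν X. μ Y. f(X,Y) for monotone binary f. -/
theorem nu_mu_contractive {L : Type*} [CompleteLattice L] (f : L → L → L)
    (hf : ∀ ⦃x₁ x₂ y₁ y₂ : L⦄, x₁ ≤ x₂ → y₁ ≤ y₂ → f x₁ y₁ ≤ f x₂ y₂) :
    OrderHom.gfp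
      ⟨fun X => OrderHom.lfp
          ⟨fun Y => X ⊓ f X Y, fun _ _ h => inf_le_inf_left X (hf le_rfl h)⟩,
        fun _ _ hX => OrderHom.lfp.monotone fun _ => inf_le_inf hX (hf hX le_rfl)⟩
    =
    OrderHom.gfp
      ⟨fun X => OrderHom.lfp
          ⟨fun Y => f X Y, fun _ _ h => hf le_rfl h⟩,
        fun _ _ hX => OrderHom.lfp.monotone fun _ => hf hX le_rfl⟩ := by
  let F (X : L) : L →o L := ⟨f X, fun _ _ h => hf le_rfl h⟩
  let G : L →o L := ⟨fun X => lfp (F X), fun _ _ hX => lfp.monotone fun _ => hf hX le_rfl⟩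
  refine le_antisymm (gfp.monotone fun _ => lfp.monotone fun _ => inf_le_right)
    (le_gfp _ (le_of_eq ?_))
  have hGa : lfp (F (gfp G)) = gfp G := map_gfp G
  calc gfp G = lfp (F (gfp G)) := hGa.symm
    _ = lfp (const L (gfp G) ⊓ F (gfp G)) := (lfp_const_inf_eq_lfp hGa.le).symm
end

section
/- Let L be a complete lattice, h : L → L monotone, U = μ Y. h(Y) its least fixpoint, and V an element of L with U ≤ V. Then the least fixpoint of the monotone map Y ↦ V ⊓ h(Y) equals U. -/
namespace OrderHom

variable {α : Type*} [CompleteLattice α]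

/-- `lfp f ≤ lfp g` because `lfp g ⊓ lfp f` is a prefixed point of `f`. -/
theorem lfp_eq_of_le_of_le_on_Iic {f g : α →o α} (hgf : g ≤ f)
    (hfg : ∀ x ≤ lfp f, f x ≤ g x) : lfp g = lfp f := by
  set w := lfp g ⊓ lfp f
  have hw : w ≤ lfp f := inf_le_right
  have hprefixed : f w ≤ w :=
    calc f w ≤ g w ⊓ f (lfp f) := le_inf (hfg w hw) (f.mono hw)
      _ ≤ g (lfp g) ⊓ lfp f := inf_le_inf (g.mono inf_le_left) (map_lfp f).le
      _ = w := by rw [map_lfp]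
  exact le_antisymm (lfp.mono hgf) ((lfp_le f hprefixed).trans inf_le_left)

end OrderHom

/-- if U = μ h and U ≤ V then μ (Y ↦ V ⊓ h Y) = U. -/
theorem lfp_inf_of_le {L : Type*} [CompleteLattice L] (h : L →o L) (V : L)
    (hUV : OrderHom.lfp h ≤ V) :
    OrderHom.lfp ⟨fun Y => V ⊓ h Y, fun _ _ hy => inf_le_inf_left V (h.mono hy)⟩ =
      OrderHom.lfp h := by
  refine OrderHom.lfp_eq_of_le_of_le_on_Iic (fun _ => inf_le_right) fun x hx => ?_
  have hhx : h x ≤ OrderHom.lfp h := (h.mono hx).trans (OrderHom.map_lfp h).le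
  exact le_inf (hhx.trans hUV) le_rfl
end

section
/- Let L be a complete lattice of subsets of a WQO (X, ≤) and suppose φ : Set X → Set X is monotone and factors through upward closure, i.e., φ(U) = φ(C↑ U) for all U (equivalently, φ(U) depends only on the upward closure of U). Then the least fixpoint μ φ is reached after finitely many iterations from ∅: there exists n ∈ ℕ with φⁿ(∅) = φ^{n+1}(∅) = μ φ. -/
/-!
The upward closures of the Kleene iterates `φⁿ(∅)` form an ascending chain of upper sets,
which stabilizes because `X` is a WQO. Since `φ` only sees upward closures, the iterates
themselves stabilize one step later, and a Kleene iterate that is a fixpoint is the least one.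
-/

theorem WellQuasiOrdered.exists_succ_eq_of_isUpperSet {X : Type*} [Preorder X]
    (hwqo : WellQuasiOrdered (α := X) (· ≤ ·)) {u : ℕ → Set X} (hu : Monotone u)
    (hup : ∀ n, IsUpperSet (u n)) : ∃ n, u (n + 1) = u n := by
  by_contra! hne
  have hnew : ∀ n, ∃ x ∈ u (n + 1), x ∉ u n := fun n =>
    Set.not_subset.mp fun hsub => hne n (hsub.antisymm (hu n.le_succ))
  choose f hf_mem hf_not_mem using hnew
  obtain ⟨i, j, hij, hle⟩ := hwqo f
  exact hf_not_mem j (hup j hle (hu hij (hf_mem i)))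

theorem OrderHom.iterate_bot_eq_lfp {α : Type*} [CompleteLattice α] (f : α →o α) {n : ℕ}
    (hfix : f (f^[n] ⊥) = f^[n] ⊥) : f^[n] ⊥ = lfp f := by
  refine le_antisymm ?_ (lfp_le f hfix.le)
  calc f^[n] ⊥ ≤ f^[n] (lfp f) := f.monotone.iterate n bot_le
    _ = lfp f := (f.isFixedPt_lfp.iterate n).eq

/-- over a WQO, a monotone operator that factors through upward closure
reaches its least fixpoint in finitely many iterations from ∅. -/
theorem upward_guarded_lfp_finite_convergence {X : Type*} [Preorder X]
    (hwqo : ∀ f : ℕ → X, ∃ i j, i < j ∧ f i ≤ f j)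
    (φ : Set X → Set X) (hmono : Monotone φ)
    (hguard : ∀ U : Set X, φ U = φ {x | ∃ u ∈ U, u ≤ x}) :
    ∃ n : ℕ, φ^[n] ∅ = φ^[n + 1] ∅ ∧ φ^[n] ∅ = OrderHom.lfp ⟨φ, hmono⟩ := by
  set F : ℕ → Set X := fun n => φ^[n] ∅
  have hF : Monotone F := hmono.monotone_iterate_of_le_map (Set.empty_subset _)
  have hF_succ (n : ℕ) : F (n + 1) = φ (F n) := Function.iterate_succ_apply' φ n ∅
  obtain ⟨n, hn⟩ := WellQuasiOrdered.exists_succ_eq_of_isUpperSet hwqo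
    (u := fun n => upperClosure (F n)) (fun m k hmk => upperClosure_anti (hF hmk))
    (fun m => (upperClosure (F m)).upper)
  have hfix : φ (F (n + 1)) = F (n + 1) :=
    calc φ (F (n + 1)) = φ (upperClosure (F (n + 1))) := hguard _
      _ = φ (upperClosure (F n)) := congrArg φ hn
      _ = F (n + 1) := ((hF_succ n).trans (hguard _)).symm
  exact ⟨n + 1, hfix.symm.trans (hF_succ (n + 1)).symm,
    OrderHom.iterate_bot_eq_lfp ⟨φ, hmono⟩ hfix⟩
end

section
/- Let (X, ≤) be a WQO and φ : Set X → Set X monotone with φ(U) = φ(K↓ U) for all U, where K↓ U is the largest downward-closed subset of U. Then the greatest fixpoint ν φ is reached after finitely many iterations from the full set X: there exists n ∈ ℕ with φⁿ(X) = φ^{n+1}(X) = ν φ. -/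
/-!
The approximants `φⁿ(X)` decrease, hence so do their lower interiors `K↓ φⁿ(X)`. These are
lower sets, and in a WQO a decreasing sequence of lower sets cannot drop forever: an element
leaving at each step would give a sequence with no good pair. Once `K↓ φⁿ(X) = K↓ φⁿ⁺¹(X)`,
the guard gives `φⁿ⁺¹(X) = φ(K↓ φⁿ(X)) = φ(K↓ φⁿ⁺¹(X)) = φⁿ⁺²(X)`, and an approximant
that is a fixpoint is the greatest one, since every approximant contains `ν φ`.
-/

open Function

namespace Set

variable {X : Type*} [Preorder X]

/-- The paper's `K↓ U`, the largest lower set contained in `U`. -/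
def lowerInterior (U : Set X) : Set X := {x | x ∈ U ∧ ∀ y, y ≤ x → y ∈ U}

theorem isLowerSet_lowerInterior (U : Set X) : IsLowerSet (lowerInterior U) :=
  fun _ _ hyx hx => ⟨hx.2 _ hyx, fun z hzy => hx.2 z (hzy.trans hyx)⟩

theorem lowerInterior_mono : Monotone (lowerInterior : Set X → Set X) :=
  fun _ _ hUV _ hx => ⟨hUV hx.1, fun y hyx => hUV (hx.2 y hyx)⟩

end Set

theorem Antitone.exists_eq_succ_of_isLowerSet {X : Type*} [Preorder X] [WellQuasiOrderedLE X]
    {s : ℕ → Set X} (hs : Antitone s) (hlower : ∀ n, IsLowerSet (s n)) :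
    ∃ n, s n = s (n + 1) := by
  by_contra! hne
  have hdrop : ∀ n, ∃ x ∈ s n, x ∉ s (n + 1) := fun n =>
    Set.exists_of_ssubset ((hs n.le_succ).ssubset_of_ne (hne n).symm)
  choose x hxmem hxdrop using hdrop
  obtain ⟨i, j, hij, hxij⟩ := wellQuasiOrdered_le x
  exact hxdrop i (hlower (i + 1) hxij (hs hij (hxmem j)))

namespace OrderHom

variable {α : Type*} [CompleteLattice α] (f : α →o α)

theorem gfp_le_iterate_top (n : ℕ) : f.gfp ≤ f^[n] ⊤ := by
  induction n with
  | zero => exact le_top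
  | succ n ih => rw [iterate_succ_apply']; exact f.gfp_le_map ih

theorem iterate_top_eq_gfp_of_eq_succ {n : ℕ} (h : f^[n] ⊤ = f^[n + 1] ⊤) :
    f^[n] ⊤ = f.gfp :=
  le_antisymm (f.le_gfp (h.trans (iterate_succ_apply' f n ⊤)).le) (f.gfp_le_iterate_top n)

end OrderHom

/-- over a WQO, a monotone operator that factors through the downward
interior reaches its greatest fixpoint in finitely many iterations from the full set. -/
theorem downward_guarded_gfp_finite_convergence {X : Type*} [Preorder X]
    (hwqo : ∀ f : ℕ → X, ∃ i j, i < j ∧ f i ≤ f j)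
    (φ : Set X → Set X) (hmono : Monotone φ)
    (hguard : ∀ U : Set X, φ U = φ {x | x ∈ U ∧ ∀ y, y ≤ x → y ∈ U}) :
    ∃ n : ℕ, φ^[n] Set.univ = φ^[n + 1] Set.univ ∧
      φ^[n] Set.univ = OrderHom.gfp ⟨φ, hmono⟩ := by
  have : WellQuasiOrderedLE X := ⟨hwqo⟩
  have happrox : Antitone fun n => φ^[n] Set.univ :=
    hmono.antitone_iterate_of_map_le (Set.subset_univ _)
  obtain ⟨n, hn⟩ := (Set.lowerInterior_mono.comp_antitone happrox).exists_eq_succ_of_isLowerSet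
    fun n => Set.isLowerSet_lowerInterior _
  have hfix : φ^[n + 1] Set.univ = φ^[n + 1 + 1] Set.univ := by
    rw [iterate_succ_apply', iterate_succ_apply' _ (n + 1), hguard, hguard (φ^[n + 1] _)]
    exact congrArg φ hn
  exact ⟨n + 1, hfix, OrderHom.iterate_top_eq_gfp_of_eq_succ ⟨φ, hmono⟩ hfix⟩
end
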